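/- Let A = abacabcbacabacbabc, B = abacabcbacbcacbabc, C = abacbcacbacabcbabc, D = abacabcbabcbabacabacacbcacbabcbababc, and let ψ be the morphism over {a,b,c} with ψ(a) = D, ψ(b) = D, ψ(c) = C. Then for every word S over {a,b,c} starting with the letter a, the number of square-free reducts of ψ(S) is at least twice the number of square-free reducts of S, i.e. r(ψ(S)) ≥ 2·r(S). -/

import Mathlib

/-- A single square reduction: a word `U ++ (X ++ X) ++ V` (with `X` nonempty)
is replaced by `U ++ X ++ V`. -/
def Step {α : Type*} (W W' : List α) : Prop :=
  ∃ U X V : List α, X ≠ [] ∧ W = U ++ (X ++ X) ++ V ∧ W' = U ++ X ++ V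

/-- `Reaches W W'` : `W'` is obtainable from `W` by a finite sequence of square reductions. -/
def Reaches {α : Type*} (W W' : List α) : Prop := Relation.ReflTransGen Step W W'

/-- A word is square-free if it contains no square `X ++ X` (with `X` nonempty) as a factor. -/
def SquareFree {α : Type*} (W : List α) : Prop :=
  ∀ X : List α, X ≠ [] → ¬ (X ++ X) <:+: W

/-- The set of square-free reducts of `W`. -/
def Reducts {α : Type*} (W : List α) : Set (List α) := {R | Reaches W R ∧ SquareFree R}

/-!
Put `μ = (A, B, C)` and `ν = (B, A, C)`. Square reductions turn `D` into `A` and into `B`, so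
every reduct `R` of `S` yields two reducts `μ(R)` and `ν(R)` of `ψ(S)`: reduce `S` to `R`, apply
`ψ`, then reduce each block `ψ(x)` to `μ(x)`, resp. `ν(x)`. These words are square-free because
`μ`, and with it `ν = μ ∘ (a b)`, is a square-free morphism by Crochemore's criterion: it is
`18`-uniform, injective, synchronizing, and square-free on square-free words of length at most
`3`. The `2 r(S)` words obtained are pairwise distinct: `μ` and `ν` are injective on words, and
as every reduct of `S` starts with `a`, `μ(R)` starts with `A` while `ν(R')` starts with `B`.
-/

section SquareFree

variable {α β : Type*}

theorem SquareFree.of_infix {v w : List α} (hw : SquareFree w) (hv : v <:+: w) : SquareFree v :=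
  fun X hX hXX => hw X hX (hXX.trans hv)

theorem SquareFree.map {f : α → β} (hf : Function.Injective f) {w : List α}
    (hw : SquareFree w) : SquareFree (w.map f) := by
  intro X hX hXX
  obtain ⟨l, hl, hXl⟩ := List.infix_map_iff.mp hXX
  have htake : (l.take X.length).map f = X := by rw [List.map_take, ← hXl, List.take_left]
  have hdrop : (l.drop X.length).map f = X := by rw [List.map_drop, ← hXl, List.drop_left]
  have heq : l.take X.length = l.drop X.length :=
    List.map_injective_iff.mpr hf (htake.trans hdrop.symm)
  refine hw (l.take X.length) (fun h => hX (by rw [← htake, h, List.map_nil])) ?_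
  rwa [← List.take_append_drop X.length l, ← heq] at hl

/-- Stated with `T.drop X.length` rather than `X ++ X <+: T` so that `decide` evaluates it
quickly. -/
theorem squareFree_iff_forall_tails {w : List α} :
    SquareFree w ↔ ∀ T ∈ w.tails, ∀ X ∈ T.inits, X ≠ [] → ¬ X <+: T.drop X.length := by
  constructor
  · rintro hw T hT X hXT hX ⟨t, ht⟩
    obtain ⟨s, rfl⟩ := (List.mem_inits _ _).mp hXT
    refine hw X hX (List.IsInfix.trans ⟨[], s.drop X.length, ?_⟩
      ((List.mem_tails _ _).mp hT).isInfix)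
    rw [List.drop_left] at ht
    rw [← ht]
    simp
  · rintro h X hX ⟨s, t, rfl⟩
    refine h (X ++ X ++ t) ((List.mem_tails _ _).mpr ⟨s, by simp⟩) X
      ((List.mem_inits _ _).mpr ⟨X ++ t, by simp⟩) hX ⟨t, by simp⟩

instance [DecidableEq α] : DecidablePred (SquareFree (α := α)) := fun _ =>
  decidable_of_iff _ squareFree_iff_forall_tails.symm

theorem not_squareFree_of_getElem?_eq {w : List α} {i m : ℕ} (hm : 0 < m)
    (hw : i + m + m ≤ w.length) (h : ∀ j < m, w[i + j]? = w[i + j + m]?) : ¬ SquareFree w := by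
  intro hsf
  set X := (w.drop i).take m
  have hsq : X ++ X = (w.drop i).take (m + m) := by
    rw [List.take_add]
    congr 1
    apply List.ext_getElem?
    intro j
    by_cases hj : j < m
    · simp [X, List.getElem?_drop, hj, h j hj, Nat.add_assoc, Nat.add_comm m]
    · simp [X, hj]
  refine hsf X ?_ (hsq ▸ (List.take_prefix _ _).isInfix.trans (List.drop_suffix _ _).isInfix)
  rw [← List.length_pos_iff, List.length_take, List.length_drop]
  omega

theorem squareFree_triple {x y z : α} (hxy : x ≠ y) (hyz : y ≠ z) : SquareFree [x, y, z] := by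
  simp [squareFree_iff_forall_tails, List.inits, List.tails, -List.mem_inits, -List.mem_tails,
    hxy, hyz]

theorem SquareFree.getElem?_ne_of_getElem?_eq_add {w : List α} (hw : SquareFree w) {m : ℕ}
    (hm0 : 0 < m) (hwm : w.length = 2 * m + 1)
    (hper : ∀ j, 1 ≤ j → j < m → w[j]? = w[j + m]?) : w[0]? ≠ w[m]? ∧ w[m]? ≠ w[2 * m]? := by
  constructor
  · refine fun e => not_squareFree_of_getElem?_eq (i := 0) hm0 (by omega) (fun j hj => ?_) hw
    rcases Nat.eq_zero_or_pos j with rfl | hj0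
    · simpa using e
    · simpa using hper j hj0 hj
  · refine fun e => not_squareFree_of_getElem?_eq (i := 1) hm0 (by omega) (fun j hj => ?_) hw
    rcases Nat.lt_or_ge (j + 1) m with hj1 | hj1
    · simpa [Nat.add_comm 1 j] using hper (j + 1) (by omega) hj1
    · rwa [show 1 + j = m by omega, show m + m = 2 * m by omega]

end SquareFree

section UniformMorphism

variable {α β : Type*} {h : α → List β} {n : ℕ}

def IsSynchronizing (h : α → List β) (n : ℕ) : Prop :=
  ∀ a b c t, 0 < t → t < n → ((h a ++ h b).drop t).take n ≠ h c

theorem length_flatMap_of_uniform (hlen : ∀ a, (h a).length = n) (w : List α) :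
    (w.flatMap h).length = n * w.length := by
  induction w with
  | nil => simp
  | cons a w ih => rw [List.flatMap_cons, List.length_append, ih, hlen, List.length_cons]; ring

theorem drop_flatMap_of_uniform (hlen : ∀ a, (h a).length = n) (j : ℕ) (w : List α) :
    (w.flatMap h).drop (n * j) = (w.drop j).flatMap h := by
  induction j generalizing w with
  | zero => simp
  | succ j ih =>
    cases w with
    | nil => simp
    | cons a w =>
      rw [List.flatMap_cons, Nat.mul_succ, Nat.add_comm, ← hlen a, List.drop_length_add_append,
        hlen, ih, List.drop_succ_cons]

theorem take_drop_flatMap_of_uniform (hlen : ∀ a, (h a).length = n) {w : List α} {j a l : ℕ}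
    (hj : j < w.length) (hal : a + l ≤ n) :
    ((w.flatMap h).drop (n * j + a)).take l = ((h w[j]).drop a).take l := by
  have := hlen w[j]
  rw [← List.drop_drop, drop_flatMap_of_uniform hlen, List.drop_eq_getElem_cons hj,
    List.flatMap_cons, List.drop_append_of_le_length (by omega),
    List.take_append_of_le_length (by simp only [List.length_drop]; omega)]

theorem take_drop_mul_flatMap_of_uniform (hlen : ∀ a, (h a).length = n) {w : List α} {j : ℕ}
    (hj : j < w.length) : ((w.flatMap h).drop (n * j)).take n = h w[j] := by
  simpa [List.take_of_length_le, hlen] using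
    take_drop_flatMap_of_uniform hlen (a := 0) (l := n) hj (by omega)

theorem take_flatMap_of_head?_eq (hlen : ∀ a, (h a).length = n) {w : List α} {a : α}
    (hw : w.head? = some a) : (w.flatMap h).take n = h a := by
  obtain ⟨t, rfl⟩ := List.head?_eq_some_iff.mp hw
  exact List.take_left' (hlen a)

theorem flatMap_injective_of_uniform (hlen : ∀ a, (h a).length = n) (hn : 0 < n)
    (hinj : Function.Injective h) : Function.Injective (List.flatMap h) := by
  intro v w hvw
  induction v generalizing w with
  | nil =>
    have := congrArg List.length hvw
    simp only [length_flatMap_of_uniform hlen, List.length_nil, Nat.mul_zero] at this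
    exact (List.length_eq_zero_iff.mp (by nlinarith)).symm
  | cons a v ih =>
    cases w with
    | nil =>
      have := congrArg List.length hvw
      simp only [length_flatMap_of_uniform hlen, List.length_cons, List.length_nil] at this
      nlinarith
    | cons b w =>
      rw [List.flatMap_cons, List.flatMap_cons] at hvw
      obtain ⟨hab, hvw⟩ := List.append_inj hvw (by rw [hlen, hlen])
      rw [hinj hab, ih hvw]

theorem take_drop_add_length_of_square {P X Q H : List β} (hH : P ++ (X ++ X) ++ Q = H)
    {a l : ℕ} (ha : P.length ≤ a) (hl : a + l ≤ P.length + X.length) :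
    (H.drop (a + X.length)).take l = (H.drop a).take l := by
  obtain ⟨b, rfl⟩ := Nat.exists_eq_add_of_le ha
  subst hH
  have hb : b + l ≤ X.length := by omega
  rw [Nat.add_assoc, List.append_assoc, List.drop_length_add_append, List.drop_length_add_append,
    Nat.add_comm b, List.append_assoc, List.drop_length_add_append,
    List.drop_append_of_le_length (by omega), List.drop_append_of_le_length (by omega),
    List.take_append_of_le_length (by simp only [List.length_drop]; omega),
    List.take_append_of_le_length (by simp only [List.length_drop]; omega)]

theorem exists_infix_flatMap_eq_of_uniform (hlen : ∀ a, (h a).length = n) (hn : 0 < n)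
    {w : List α} {P Y Q : List β} (hw : w.flatMap h = P ++ Y ++ Q) :
    ∃ v P' Q', v <:+: w ∧ v.flatMap h = P' ++ Y ++ Q' ∧ P'.length < n ∧ Q'.length < n := by
  induction hk : w.length using Nat.strong_induction_on generalizing w P Q with
  | _ k ih =>
  have hlength := congrArg List.length hw
  simp only [length_flatMap_of_uniform hlen, List.length_append] at hlength
  by_cases hP : n ≤ P.length
  · obtain ⟨a, v, rfl⟩ := List.exists_cons_of_ne_nil (l := w)
      (by rintro rfl; simp at hlength; omega)
    rw [List.flatMap_cons, ← List.take_append_drop n P, List.append_assoc, List.append_assoc]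
      at hw
    obtain ⟨-, hv⟩ := List.append_inj hw (by simp [hlen]; omega)
    obtain ⟨u, P', Q', hu, huv⟩ := ih v.length (by simp [← hk]) (P := P.drop n)
      (by rw [hv, List.append_assoc]) rfl
    exact ⟨u, P', Q', hu.trans (List.suffix_cons a v).isInfix, huv⟩
  by_cases hQ : n ≤ Q.length
  · obtain ⟨v, a, rfl⟩ := (List.eq_nil_or_concat' w).resolve_left
      (by rintro rfl; simp at hlength; omega)
    rw [List.flatMap_append, ← List.take_append_drop (Q.length - n) Q, ← List.append_assoc] at hw
    obtain ⟨hv, -⟩ := List.append_inj' hw (by simp [hlen]; omega)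
    obtain ⟨u, P', Q', hu, huv⟩ := ih v.length (by simp [← hk]) hv rfl
    exact ⟨u, P', Q', hu.trans (List.prefix_append v [a]).isInfix, huv⟩
  exact ⟨w, P, Q, List.infix_refl w, hw, by omega, by omega⟩

theorem not_squareFree_flatMap_triple {x y z : α} {p : ℕ} (hp : p < (h x).length)
    (hxy : (h x).drop p = (h y).drop p) (hyz : (h y).take p = (h z).take p) :
    ¬ SquareFree ([x, y, z].flatMap h) := by
  refine fun hsf => hsf ((h x).drop p ++ (h z).take p) (by simp; omega)
    ⟨(h x).take p, (h z).drop p, ?_⟩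
  conv_rhs => rw [List.flatMap_cons, List.flatMap_cons, List.flatMap_cons, List.flatMap_nil,
    ← List.take_append_drop p (h x), ← List.take_append_drop p (h y),
    ← List.take_append_drop p (h z), hyz, ← hxy]
  simp only [List.append_assoc, List.append_nil]

theorem dvd_of_take_drop_flatMap_eq (hlen : ∀ a, (h a).length = n)
    (hsync : IsSynchronizing h n) {w : List α} {s : ℕ} {c : α} (hs : s + n ≤ n * w.length)
    (he : ((w.flatMap h).drop s).take n = h c) : n ∣ s := by
  rcases Nat.eq_zero_or_pos n with rfl | hn
  · simp_all
  by_contra hns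
  have ht : 0 < s % n := Nat.pos_of_ne_zero fun h0 => hns (Nat.dvd_of_mod_eq_zero h0)
  have htn : s % n < n := Nat.mod_lt s hn
  have hs' : s = n * (s / n) + s % n := (Nat.div_add_mod s n).symm
  have hj : s / n + 1 < w.length := by
    apply Nat.lt_of_mul_lt_mul_left (a := n)
    rw [Nat.mul_add]
    omega
  rw [hs', ← List.drop_drop, drop_flatMap_of_uniform hlen,
    List.drop_eq_getElem_cons (l := w) (i := s / n) (by omega), List.drop_eq_getElem_cons hj,
    List.flatMap_cons, List.flatMap_cons, ← List.append_assoc,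
    List.drop_append_of_le_length (by simp [hlen]; omega),
    List.take_append_of_le_length (by simp [hlen]; omega)] at he
  exact hsync _ _ _ _ ht htn he

theorem dvd_length_of_square_flatMap (hlen : ∀ a, (h a).length = n)
    (hsync : IsSynchronizing h n) {w : List α} (hw : 4 ≤ w.length) {P X Q : List β}
    (hH : P ++ (X ++ X) ++ Q = w.flatMap h) (hP : P.length < n) (hQ : Q.length < n) :
    n ∣ X.length := by
  have hlength := congrArg List.length hH
  simp only [List.length_append, length_flatMap_of_uniform hlen] at hlength
  have h4 : n * 4 ≤ n * w.length := Nat.mul_le_mul_left n hw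
  -- The second or the third block lies inside one half of the square; its copy in the other
  -- half is again the image of a letter, so synchronization puts it at a multiple of `n`.
  by_cases hX : 2 * n ≤ P.length + X.length
  · have hper := take_drop_add_length_of_square hH (a := n * 1) (l := n) (by omega) (by omega)
    rw [take_drop_mul_flatMap_of_uniform hlen (by omega)] at hper
    have := dvd_of_take_drop_flatMap_eq hlen hsync (by omega) hper
    exact (Nat.dvd_add_right (dvd_mul_right n 1)).mp this
  · have hper := take_drop_add_length_of_square hH (a := 2 * n - X.length) (l := n)
      (by omega) (by omega)
    rw [show 2 * n - X.length + X.length = n * 2 by omega,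
      take_drop_mul_flatMap_of_uniform hlen (by omega)] at hper
    have := Nat.dvd_sub (dvd_mul_left n 2)
      (dvd_of_take_drop_flatMap_eq hlen hsync (by omega) hper.symm)
    rwa [Nat.sub_sub_self (by omega)] at this

theorem getElem?_eq_of_square_flatMap (hlen : ∀ a, (h a).length = n)
    (hinj : Function.Injective h) {w : List α} {P X Q : List β}
    (hH : P ++ (X ++ X) ++ Q = w.flatMap h) {m j : ℕ} (hm : X.length = n * m)
    (hPj : P.length ≤ n * j) (hjX : n * j + n ≤ P.length + X.length) (hw : j + m < w.length) :
    w[j]? = w[j + m]? := by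
  have hper := take_drop_add_length_of_square hH hPj hjX
  rw [hm, ← Nat.mul_add, take_drop_mul_flatMap_of_uniform hlen hw,
    take_drop_mul_flatMap_of_uniform hlen (by omega)] at hper
  rw [List.getElem?_eq_getElem (by omega), List.getElem?_eq_getElem hw, hinj hper]

theorem not_squareFree_of_square_flatMap_of_length_eq_zero (hlen : ∀ a, (h a).length = n)
    (hinj : Function.Injective h) {w : List α} {P X Q : List β}
    (hH : P ++ (X ++ X) ++ Q = w.flatMap h) (hP : P.length = 0) (hQ : Q.length < n)
    {m : ℕ} (hm : X.length = n * m) (hm0 : 0 < m) : ¬ SquareFree w := by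
  have hlength := congrArg List.length hH
  simp only [List.length_append, length_flatMap_of_uniform hlen] at hlength
  have hw : w.length = 2 * m := by
    have h1 : n * (2 * m) ≤ n * w.length := by rw [Nat.mul_left_comm]; omega
    have h2 : n * w.length < n * (2 * m + 1) := by rw [Nat.mul_add, Nat.mul_left_comm]; omega
    have := Nat.le_of_mul_le_mul_left h1 (by omega)
    have := Nat.lt_of_mul_lt_mul_left h2
    omega
  refine not_squareFree_of_getElem?_eq (i := 0) hm0 (by omega) fun j hj => ?_
  have hjm : n * (j + 1) ≤ n * m := Nat.mul_le_mul_left n hj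
  simpa using getElem?_eq_of_square_flatMap hlen hinj hH hm (j := j) (by omega)
    (by rw [Nat.mul_succ] at hjm; omega) (by omega)

theorem drop_eq_and_take_eq_of_square_flatMap (hlen : ∀ a, (h a).length = n) {w : List α}
    {P X Q : List β} (hH : P ++ (X ++ X) ++ Q = w.flatMap h) (hP : P.length < n) {m : ℕ}
    (hm : X.length = n * m) (hm0 : 0 < m) (hw : 2 * m < w.length) :
    (h w[0]).drop P.length = (h w[m]).drop P.length ∧
      (h w[m]).take P.length = (h w[2 * m]).take P.length := by
  have hnm : n ≤ n * m := Nat.le_mul_of_pos_right n hm0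
  constructor
  · have := take_drop_add_length_of_square hH (a := n * 0 + P.length) (l := n - P.length)
      (by omega) (by omega)
    rw [show n * 0 + P.length + X.length = n * m + P.length by omega,
      take_drop_flatMap_of_uniform hlen (by omega) (by omega),
      take_drop_flatMap_of_uniform hlen (by omega) (by omega)] at this
    simpa [List.take_of_length_le, hlen] using this.symm
  · have := take_drop_add_length_of_square hH (a := n * m + 0) (l := P.length)
      (by omega) (by omega)
    rw [show n * m + 0 + X.length = n * (2 * m) + 0 by rw [hm]; ring,
      take_drop_flatMap_of_uniform hlen (by omega) (by omega),
      take_drop_flatMap_of_uniform hlen (by omega) (by omega)] at this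
    simpa using this.symm

theorem exists_squareFree_triple_of_square_flatMap (hlen : ∀ a, (h a).length = n)
    (hinj : Function.Injective h) {w : List α} (hw : SquareFree w) {P X Q : List β}
    (hH : P ++ (X ++ X) ++ Q = w.flatMap h) (hP0 : 0 < P.length) (hP : P.length < n)
    (hQ : Q.length < n) {m : ℕ} (hm : X.length = n * m) (hm0 : 0 < m) :
    ∃ x y z, SquareFree [x, y, z] ∧ ¬ SquareFree ([x, y, z].flatMap h) := by
  have hlength := congrArg List.length hH
  simp only [List.length_append, length_flatMap_of_uniform hlen] at hlength
  have hwm : w.length = 2 * m + 1 := by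
    have h1 : n * (2 * m) < n * w.length := by rw [Nat.mul_left_comm]; omega
    have h2 : n * w.length < n * (2 * m + 2) := by rw [Nat.mul_add, Nat.mul_left_comm]; omega
    have := Nat.lt_of_mul_lt_mul_left h1
    have := Nat.lt_of_mul_lt_mul_left h2
    omega
  have hper : ∀ j, 1 ≤ j → j < m → w[j]? = w[j + m]? := fun j hj1 hjm => by
    have h1 : n * 1 ≤ n * j := Nat.mul_le_mul_left n hj1
    have h2 : n * (j + 1) ≤ n * m := Nat.mul_le_mul_left n hjm
    exact getElem?_eq_of_square_flatMap hlen hinj hH hm (by omega)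
      (by rw [Nat.mul_succ] at h2; omega) (by omega)
  obtain ⟨hxy', hyz'⟩ := hw.getElem?_ne_of_getElem?_eq_add hm0 hwm hper
  obtain ⟨hxy, hyz⟩ := drop_eq_and_take_eq_of_square_flatMap hlen hH hP hm hm0 (by omega)
  rw [List.getElem?_eq_getElem (by omega), List.getElem?_eq_getElem (by omega), ne_eq,
    Option.some_inj] at hxy' hyz'
  exact ⟨_, _, _, squareFree_triple hxy' hyz',
    not_squareFree_flatMap_triple (by rw [hlen]; exact hP) hxy hyz⟩

/-- Cutting `w` down to a factor whose image holds the square with less than a block on either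
side, synchronization makes the square's half-length a multiple of `n`: then the square is either
the image of a square of `w` or lies across three consecutive blocks `h x`, `h y`, `h z`. -/
theorem SquareFree.flatMap_of_uniform (hlen : ∀ a, (h a).length = n) (hn : 0 < n)
    (hinj : Function.Injective h) (hsync : IsSynchronizing h n)
    (hshort : ∀ v : List α, v.length ≤ 3 → SquareFree v → SquareFree (v.flatMap h))
    {w : List α} (hw : SquareFree w) : SquareFree (w.flatMap h) := by
  rintro X hX ⟨P, Q, hH⟩
  obtain ⟨v, P, Q, hv, hH, hP, hQ⟩ := exists_infix_flatMap_eq_of_uniform hlen hn hH.symm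
  have hvsf := hw.of_infix hv
  by_cases hv3 : v.length ≤ 3
  · exact hshort v hv3 hvsf X hX ⟨P, Q, hH.symm⟩
  obtain ⟨m, hm⟩ := dvd_length_of_square_flatMap hlen hsync (by omega) hH.symm hP hQ
  have hm0 : 0 < m :=
    Nat.pos_of_ne_zero fun h0 => hX (List.length_eq_zero_iff.mp (by simp [hm, h0]))
  rcases Nat.eq_zero_or_pos P.length with hP0 | hP0
  · exact not_squareFree_of_square_flatMap_of_length_eq_zero hlen hinj hH.symm hP0 hQ hm hm0
      hvsf
  · obtain ⟨x, y, z, hxyz, hsq⟩ :=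
      exists_squareFree_triple_of_square_flatMap hlen hinj hvsf hH.symm hP0 hP hQ hm hm0
    exact hsq (hshort _ (by simp) hxyz)

end UniformMorphism

section Reduction

variable {α : Type*} {W W' : List α}

theorem Step.append_append (L R : List α) (h : Step W W') :
    Step (L ++ W ++ R) (L ++ W' ++ R) := by
  obtain ⟨U, X, V, hX, rfl, rfl⟩ := h
  exact ⟨L ++ U, X, V ++ R, hX, by simp, by simp⟩

theorem Reaches.append_append (L R : List α) (h : Reaches W W') :
    Reaches (L ++ W ++ R) (L ++ W' ++ R) :=
  Relation.ReflTransGen.lift (fun w => L ++ w ++ R) (fun _ _ => Step.append_append L R) _ _ h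

theorem Reaches.append {W₁ W₁' W₂ W₂' : List α} (h₁ : Reaches W₁ W₁') (h₂ : Reaches W₂ W₂') :
    Reaches (W₁ ++ W₂) (W₁' ++ W₂') := by
  have e₁ := h₁.append_append [] W₂
  have e₂ := h₂.append_append W₁' []
  simp only [List.nil_append, List.append_nil] at e₁ e₂
  exact e₁.trans e₂

theorem Reaches.flatMap_of_forall {f g : α → List α} (hfg : ∀ a, Reaches (f a) (g a))
    (R : List α) : Reaches (R.flatMap f) (R.flatMap g) := by
  induction R with
  | nil => exact .refl
  | cons a R ih => exact (hfg a).append ih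

theorem Step.flatMap {f : α → List α} (hf : ∀ a, f a ≠ []) (h : Step W W') :
    Step (W.flatMap f) (W'.flatMap f) := by
  obtain ⟨U, X, V, hX, rfl, rfl⟩ := h
  refine ⟨U.flatMap f, X.flatMap f, V.flatMap f, ?_, by simp, by simp⟩
  obtain ⟨a, X, rfl⟩ := List.exists_cons_of_ne_nil hX
  simp [hf a]

theorem Reaches.flatMap {f : α → List α} (hf : ∀ a, f a ≠ []) (h : Reaches W W') :
    Reaches (W.flatMap f) (W'.flatMap f) :=
  Relation.ReflTransGen.lift (List.flatMap f) (fun _ _ => Step.flatMap hf) _ _ h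

theorem Step.head?_eq (h : Step W W') : W'.head? = W.head? := by
  obtain ⟨U, X, V, hX, rfl, rfl⟩ := h
  obtain ⟨a, X, rfl⟩ := List.exists_cons_of_ne_nil hX
  cases U <;> simp

theorem Reaches.head?_eq (h : Reaches W W') : W'.head? = W.head? := by
  induction h with
  | refl => rfl
  | tail _ hs ih => exact hs.head?_eq.trans ih

theorem Step.sublist (h : Step W W') : W'.Sublist W := by
  obtain ⟨U, X, V, -, rfl, rfl⟩ := h
  exact ((List.sublist_append_left X X).append_left U).append_right V

theorem Reaches.sublist (h : Reaches W W') : W'.Sublist W := by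
  induction h with
  | refl => exact .refl _
  | tail _ hs ih => exact hs.sublist.trans ih

theorem reducts_finite (W : List α) : (Reducts W).Finite :=
  W.sublists.finite_toSet.subset fun _ hR => List.mem_sublists.mpr hR.1.sublist

theorem flatMap_mem_reducts {f g : α → List α} (hf : ∀ a, f a ≠ [])
    (hfg : ∀ a, Reaches (f a) (g a)) (hg : ∀ w, SquareFree w → SquareFree (w.flatMap g))
    {S R : List α} (hR : R ∈ Reducts S) : R.flatMap g ∈ Reducts (S.flatMap f) :=
  ⟨(hR.1.flatMap hf).trans (Reaches.flatMap_of_forall hfg R), hg R hR.2⟩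

theorem two_mul_ncard_reducts_le {f g₁ g₂ : α → List α} (hf : ∀ a, f a ≠ [])
    (hfg₁ : ∀ a, Reaches (f a) (g₁ a)) (hfg₂ : ∀ a, Reaches (f a) (g₂ a))
    (hg₁ : ∀ w, SquareFree w → SquareFree (w.flatMap g₁))
    (hg₂ : ∀ w, SquareFree w → SquareFree (w.flatMap g₂))
    (hinj₁ : Function.Injective (List.flatMap g₁)) (hinj₂ : Function.Injective (List.flatMap g₂))
    {S : List α} (hdisj : ∀ R ∈ Reducts S, ∀ R' ∈ Reducts S, R.flatMap g₁ ≠ R'.flatMap g₂) :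
    2 * (Reducts S).ncard ≤ (Reducts (S.flatMap f)).ncard := by
  have hsub : List.flatMap g₁ '' Reducts S ∪ List.flatMap g₂ '' Reducts S
      ⊆ Reducts (S.flatMap f) := Set.union_subset
    (Set.image_subset_iff.mpr fun _ => flatMap_mem_reducts hf hfg₁ hg₁)
    (Set.image_subset_iff.mpr fun _ => flatMap_mem_reducts hf hfg₂ hg₂)
  have hdisj' : Disjoint (List.flatMap g₁ '' Reducts S) (List.flatMap g₂ '' Reducts S) := by
    rw [Set.disjoint_left]
    rintro _ ⟨R, hR, rfl⟩ ⟨R', hR', he⟩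
    exact hdisj R hR R' hR' he.symm
  calc 2 * (Reducts S).ncard
      = (List.flatMap g₁ '' Reducts S ∪ List.flatMap g₂ '' Reducts S).ncard := by
        rw [Set.ncard_union_eq hdisj' ((reducts_finite S).image _) ((reducts_finite S).image _),
          Set.ncard_image_of_injective _ hinj₁, Set.ncard_image_of_injective _ hinj₂, two_mul]
    _ ≤ (Reducts (S.flatMap f)).ncard := Set.ncard_le_ncard hsub (reducts_finite _)

theorem Step.of_take_drop_eq {i l : ℕ} (hl : 0 < l)
    (hsq : (W.drop i).take l = (W.drop (i + l)).take l) (hW : i + l + l ≤ W.length) :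
    Step W (W.take (i + l) ++ W.drop (i + l + l)) := by
  refine ⟨W.take i, (W.drop i).take l, W.drop (i + l + l), ?_, ?_, List.take_add ▸ rfl⟩
  · rw [← List.length_pos_iff, List.length_take, List.length_drop]
    omega
  · have h₁ : W.drop i = (W.drop i).take l ++ W.drop (i + l) := by
      conv_lhs => rw [← List.take_append_drop l (W.drop i)]
      rw [List.drop_drop]
    have h₂ : W.drop (i + l) = (W.drop i).take l ++ W.drop (i + l + l) := by
      conv_lhs => rw [← List.take_append_drop l (W.drop (i + l))]
      rw [List.drop_drop, hsq]
    conv_lhs => rw [← W.take_append_drop i, h₁, h₂]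
    simp only [List.append_assoc]

/-- `reduceSquares W [(i₁, l₁), …, (iₖ, lₖ)]` reduces in turn the square `X X` with `|X| = lⱼ`
starting at position `iⱼ`, and is `none` as soon as there is no such square. -/
def reduceSquares [DecidableEq α] : List α → List (ℕ × ℕ) → Option (List α)
  | W, [] => some W
  | W, (i, l) :: ps =>
    if 0 < l ∧ (W.drop i).take l = (W.drop (i + l)).take l ∧ i + l + l ≤ W.length then
      reduceSquares (W.take (i + l) ++ W.drop (i + l + l)) ps
    else none

theorem reaches_of_reduceSquares_eq_some [DecidableEq α] {ps : List (ℕ × ℕ)} {R : List α}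
    (h : reduceSquares W ps = some R) : Reaches W R := by
  induction ps generalizing W with
  | nil => exact Option.some.inj h ▸ .refl
  | cons p ps ih =>
    obtain ⟨i, l⟩ := p
    rw [reduceSquares] at h
    split_ifs at h with hsq
    exact .head (Step.of_take_drop_eq hsq.1 hsq.2.1 hsq.2.2) (ih h)

end Reduction

namespace PsiReducts

def A : List (Fin 3) := [0,1,0,2,0,1,2,1,0,2,0,1,0,2,1,0,1,2]
def B : List (Fin 3) := [0,1,0,2,0,1,2,1,0,2,1,2,0,2,1,0,1,2]
def C : List (Fin 3) := [0,1,0,2,1,2,0,2,1,0,2,0,1,2,1,0,1,2]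
def D : List (Fin 3) := [0,1,0,2,0,1,2,1,0,1,2,1,0,1,0,2,0,1,0,2,0,2,1,2,0,2,1,0,1,2,1,0,1,0,1,2]

def μ : Fin 3 → List (Fin 3) := ![A, B, C]
def ν : Fin 3 → List (Fin 3) := μ ∘ Equiv.swap 0 1
def ψ : Fin 3 → List (Fin 3) := ![D, D, C]

theorem μ_length : ∀ a, (μ a).length = 18 := by decide

theorem μ_injective : Function.Injective μ := by decide

theorem μ_isSynchronizing : IsSynchronizing μ 18 := by
  have : ∀ a b c, ∀ t < 18, 0 < t → ((μ a ++ μ b).drop t).take 18 ≠ μ c := by decide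
  exact fun a b c t ht₀ ht => this a b c t ht ht₀

set_option maxRecDepth 10000 in
theorem squareFree_flatMap_μ_of_length_le_three :
    ∀ w : List (Fin 3), w.length ≤ 3 → SquareFree w → SquareFree (w.flatMap μ)
  | [], _, _ => by decide
  | [a], _, _ => by revert a; decide
  | [a, b], _, _ => by revert a b; decide
  | [a, b, c], _, _ => by revert a b c; decide
  | _ :: _ :: _ :: _ :: _, hw, _ => by simp only [List.length_cons] at hw; omega

theorem squareFree_flatMap_μ {w : List (Fin 3)} (hw : SquareFree w) : SquareFree (w.flatMap μ) :=
  hw.flatMap_of_uniform μ_length (by norm_num) μ_injective μ_isSynchronizing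
    squareFree_flatMap_μ_of_length_le_three

theorem squareFree_flatMap_ν {w : List (Fin 3)} (hw : SquareFree w) : SquareFree (w.flatMap ν) :=
  (List.flatMap_map _ μ w) ▸ squareFree_flatMap_μ (hw.map (Equiv.swap 0 1).injective)

theorem D_reaches_A : Reaches D A :=
  reaches_of_reduceSquares_eq_some (ps := [(4, 4), (7, 2), (13, 4), (12, 2), (13, 4), (14, 2)])
    (by decide)

theorem D_reaches_B : Reaches D B :=
  reaches_of_reduceSquares_eq_some (ps := [(4, 4), (7, 2), (7, 4), (8, 2), (13, 4), (14, 2)])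
    (by decide)

theorem ψ_reaches_μ : ∀ a, Reaches (ψ a) (μ a) := by
  intro a
  fin_cases a
  exacts [D_reaches_A, D_reaches_B, .refl]

theorem ψ_reaches_ν : ∀ a, Reaches (ψ a) (ν a) := by
  intro a
  fin_cases a
  exacts [D_reaches_B, D_reaches_A, .refl]

theorem two_mul_ncard_reducts_le_flatMap_ψ {S : List (Fin 3)} (hS : S.head? = some 0) :
    2 * (Reducts S).ncard ≤ (Reducts (S.flatMap ψ)).ncard := by
  refine two_mul_ncard_reducts_le (by decide) ψ_reaches_μ ψ_reaches_ν
    (fun _ => squareFree_flatMap_μ) (fun _ => squareFree_flatMap_ν)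
    (flatMap_injective_of_uniform μ_length (by norm_num) μ_injective)
    (flatMap_injective_of_uniform (fun _ => μ_length _) (by norm_num)
      (μ_injective.comp (Equiv.injective _)))
    fun R hR R' hR' he => ?_
  have hA := take_flatMap_of_head?_eq μ_length (hR.1.head?_eq.trans hS)
  have hB := take_flatMap_of_head?_eq (h := ν) (fun _ => μ_length _) (hR'.1.head?_eq.trans hS)
  exact absurd (hA.symm.trans (he ▸ hB)) (by decide)

end PsiReducts

/-- With `C = abacbcacbacabcbabc`, `D = abacabcbabcbabacabacacbcacbabcbababc` and
`ψ : a ↦ D, b ↦ D, c ↦ C` (letters of `Fin 3`: `a = 0`, `b = 1`, `c = 2`),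
every word `S` starting with `a` satisfies `r(ψ(S)) ≥ 2 · r(S)`. -/
theorem psi_doubles_reducts
    (C D : List (Fin 3))
    (hC : C = [0,1,0,2,1,2,0,2,1,0,2,0,1,2,1,0,1,2])
    (hD : D = [0,1,0,2,0,1,2,1,0,1,2,1,0,1,0,2,0,1,0,2,0,2,1,2,0,2,1,0,1,2,1,0,1,0,1,2])
    (ψ : Fin 3 → List (Fin 3)) (hψ : ψ = ![D, D, C])
    (S : List (Fin 3)) (hS : S.head? = some 0) :
    2 * (Reducts S).ncard ≤ (Reducts (S.flatMap ψ)).ncard := by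
  subst hC hD hψ
  exact PsiReducts.two_mul_ncard_reducts_le_flatMap_ψ hS
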